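/- (Bathtub-type lower bound.) Let K > 0 and let g : ℝ → ℝ be measurable with 0 ≤ g(x) ≤ K for almost every x. Assume g and x ↦ x²·g(x) are Lebesgue integrable and set M := ∫_ℝ g(x) dx. Then ∫_ℝ g(x)·x² dx ≥ M³/(12·K²). -/

import Mathlib

/-!
Compare `g` with the extremal profile `K · 1_{[-r, r]}`: pointwise,
`(g x - K · 1_{[-r,r]} x) (x² - r²) ≥ 0`, because both factors are `≤ 0` inside the interval
and `≥ 0` outside it. Integrating gives `∫ g x² ≥ r² M - 4 K r³ / 3` for every `r ≥ 0`, and the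
choice `r = M / (2K)`, where the right-hand side is maximal, yields `M³ / (12 K²)`.
-/

open MeasureTheory Set

lemma sq_mul_add_indicator_le_mul_sq {K r x y : ℝ} (hr : 0 ≤ r) (hy₀ : 0 ≤ y) (hyK : y ≤ K) :
    r ^ 2 * y + (Icc (-r) r).indicator (fun x => K * (x ^ 2 - r ^ 2)) x ≤ y * x ^ 2 := by
  by_cases hx : x ∈ Icc (-r) r
  · have hxr : x ^ 2 ≤ r ^ 2 := sq_le_sq' hx.1 hx.2
    rw [indicator_of_mem hx]
    nlinarith [mul_nonneg (sub_nonneg.2 hyK) (sub_nonneg.2 hxr)]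
  · have hrx : r ^ 2 ≤ x ^ 2 := by
      rw [sq_le_sq, abs_of_nonneg hr]
      by_contra! h
      exact hx (abs_le.1 h.le)
    rw [indicator_of_notMem hx]
    nlinarith

lemma integral_Icc_const_mul_sq_sub_sq (K r : ℝ) (hr : 0 ≤ r) :
    ∫ x in Icc (-r) r, K * (x ^ 2 - r ^ 2) = -(4 * K * r ^ 3 / 3) := by
  rw [integral_Icc_eq_integral_Ioc, ← intervalIntegral.integral_of_le (by linarith),
    intervalIntegral.integral_const_mul, intervalIntegral.integral_sub (by simp) (by simp),
    integral_pow, intervalIntegral.integral_const, smul_eq_mul]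
  ring

lemma sq_mul_integral_sub_le_integral_mul_sq {K r : ℝ} {g : ℝ → ℝ} (hr : 0 ≤ r)
    (hbd : ∀ᵐ x : ℝ, 0 ≤ g x ∧ g x ≤ K) (hint : Integrable g)
    (hint2 : Integrable (fun x => x ^ 2 * g x)) :
    r ^ 2 * (∫ x, g x) - 4 * K * r ^ 3 / 3 ≤ ∫ x, g x * x ^ 2 := by
  have hind : Integrable ((Icc (-r) r).indicator fun x => K * (x ^ 2 - r ^ 2)) :=
    (by fun_prop : Continuous fun x : ℝ => K * (x ^ 2 - r ^ 2)).integrableOn_Icc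
      |>.integrable_indicator measurableSet_Icc
  have hmono : ∫ x, (r ^ 2 * g x + (Icc (-r) r).indicator (fun x => K * (x ^ 2 - r ^ 2)) x)
      ≤ ∫ x, g x * x ^ 2 := integral_mono_ae ((hint.const_mul (r ^ 2)).add hind)
    (by simpa only [mul_comm] using hint2)
    (hbd.mono fun x hx => sq_mul_add_indicator_le_mul_sq hr hx.1 hx.2)
  rwa [integral_add (hint.const_mul _) hind, integral_const_mul,
    integral_indicator measurableSet_Icc, integral_Icc_const_mul_sq_sub_sq K r hr, ← sub_eq_add_neg] at hmono

theorem statement_7 (K : ℝ) (hK : 0 < K) (g : ℝ → ℝ)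
    (hbd : ∀ᵐ x : ℝ, 0 ≤ g x ∧ g x ≤ K)
    (hint : Integrable g) (hint2 : Integrable (fun x => x ^ 2 * g x)) :
    (∫ x : ℝ, g x) ^ 3 / (12 * K ^ 2) ≤ ∫ x : ℝ, g x * x ^ 2 := by
  have hM : 0 ≤ ∫ x, g x := integral_nonneg_of_ae (hbd.mono fun x hx => hx.1)
  calc (∫ x, g x) ^ 3 / (12 * K ^ 2)
      = ((∫ x, g x) / (2 * K)) ^ 2 * (∫ x, g x) - 4 * K * ((∫ x, g x) / (2 * K)) ^ 3 / 3 := by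
        field_simp
        ring
    _ ≤ ∫ x, g x * x ^ 2 :=
        sq_mul_integral_sub_le_integral_mul_sq (by positivity) hbd hint hint2
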